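/- arXiv:2005.05259 — 2 statements merged into one kernel-verified Lean document; each statement's English description precedes it below -/
import Mathlib

section
/- For all real numbers s1, s2 ≥ 0 and every γ > 0, one has (s1 - s2)·(s1^γ - s2^γ) ≥ (4γ/(γ+1)²)·(s1^{(γ+1)/2} - s2^{(γ+1)/2})². -/
/-!
With `m = (γ + 1) / 2`, the fundamental theorem of calculus writes `(s1 ^ γ - s2 ^ γ) / γ` and
`(s1 ^ m - s2 ^ m) / m` as the integrals over `[s2, s1]` of `x ^ (γ - 1)` and of its square root
`x ^ ((γ - 1) / 2)`. The inequality is then Cauchy–Schwarz,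
`(∫ f) ^ 2 ≤ (s1 - s2) * ∫ f ^ 2`.
-/

open intervalIntegral MeasureTheory Set Interval

theorem sq_intervalIntegral_le_of_le {f : ℝ → ℝ} {a b : ℝ} (hab : a ≤ b)
    (hf : IntervalIntegrable f volume a b)
    (hf2 : IntervalIntegrable (fun x => f x ^ 2) volume a b) :
    (∫ x in a..b, f x) ^ 2 ≤ (b - a) * ∫ x in a..b, f x ^ 2 := by
  set I := ∫ x in a..b, f x
  obtain ⟨t, hmean⟩ : ∃ t, t * (b - a) = I := by
    rcases hab.eq_or_lt with rfl | hlt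
    · exact ⟨0, by simp [I]⟩
    · exact ⟨I / (b - a), div_mul_cancel₀ I (sub_pos.2 hlt).ne'⟩
  have hvar : 0 ≤ ∫ x in a..b, (f x - t) ^ 2 := integral_nonneg hab fun _ _ => sq_nonneg _
  have hexpand : ∫ x in a..b, (f x - t) ^ 2
      = (∫ x in a..b, f x ^ 2) - 2 * t * I + t ^ 2 * (b - a) := by
    have : (fun x => (f x - t) ^ 2) = fun x => f x ^ 2 - 2 * t * f x + t ^ 2 := by ext; ring
    rw [this, integral_add (hf2.sub (hf.const_mul _)) intervalIntegrable_const,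
      integral_sub hf2 (hf.const_mul _), intervalIntegral.integral_const_mul,
      intervalIntegral.integral_const, smul_eq_mul]
    ring
  have := mul_nonneg (sub_nonneg.2 hab) hvar
  rw [hexpand] at this
  linear_combination this + (t * (b - a) - I) * hmean

-- Both sides change sign together when the interval is reversed.
theorem sq_intervalIntegral_le {f : ℝ → ℝ} {a b : ℝ}
    (hf : IntervalIntegrable f volume a b)
    (hf2 : IntervalIntegrable (fun x => f x ^ 2) volume a b) :
    (∫ x in a..b, f x) ^ 2 ≤ (b - a) * ∫ x in a..b, f x ^ 2 := by
  rcases le_total a b with hab | hba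
  · exact sq_intervalIntegral_le_of_le hab hf hf2
  · have := sq_intervalIntegral_le_of_le hba hf.symm hf2.symm
    rw [integral_symm a b, integral_symm a b, neg_sq] at this
    linarith

theorem Real.rpow_div_two_sq {x : ℝ} (hx : 0 ≤ x) (r : ℝ) : (x ^ (r / 2)) ^ 2 = x ^ r := by
  rw [← Real.rpow_natCast, ← Real.rpow_mul hx]
  norm_num

theorem stmt_0 (s1 s2 γ : ℝ) (hs1 : 0 ≤ s1) (hs2 : 0 ≤ s2) (hγ : 0 < γ) :
    (s1 - s2) * (s1 ^ γ - s2 ^ γ) ≥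
      (4 * γ / (γ + 1) ^ 2) * (s1 ^ ((γ + 1) / 2) - s2 ^ ((γ + 1) / 2)) ^ 2 := by
  have hsq : EqOn (fun x => (x ^ ((γ - 1) / 2)) ^ 2) (fun x => x ^ (γ - 1)) [[s2, s1]] :=
    fun x hx => Real.rpow_div_two_sq ((le_min hs2 hs1).trans hx.1) _
  have hroot : ∫ x in s2..s1, x ^ ((γ - 1) / 2)
      = (s1 ^ ((γ + 1) / 2) - s2 ^ ((γ + 1) / 2)) / ((γ + 1) / 2) := by
    rw [integral_rpow (Or.inl (by linarith))]
    ring_nf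
  have hsquare : ∫ x in s2..s1, (x ^ ((γ - 1) / 2)) ^ 2 = (s1 ^ γ - s2 ^ γ) / γ := by
    rw [integral_congr hsq, integral_rpow (Or.inl (by linarith))]
    ring_nf
  have hcs := sq_intervalIntegral_le (intervalIntegrable_rpow' (by linarith))
    ((intervalIntegrable_congr (hsq.mono uIoc_subset_uIcc)).2
      (intervalIntegrable_rpow' (by linarith)))
  rw [hroot, hsquare] at hcs
  have hγ1 : 0 < γ + 1 := by linarith
  rw [ge_iff_le]
  calc (4 * γ / (γ + 1) ^ 2) * (s1 ^ ((γ + 1) / 2) - s2 ^ ((γ + 1) / 2)) ^ 2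
      = γ * ((s1 ^ ((γ + 1) / 2) - s2 ^ ((γ + 1) / 2)) / ((γ + 1) / 2)) ^ 2 := by
        field_simp; ring
    _ ≤ γ * ((s1 - s2) * ((s1 ^ γ - s2 ^ γ) / γ)) := by gcongr
    _ = (s1 - s2) * (s1 ^ γ - s2 ^ γ) := by field_simp
end

section
/- Let N > 2s with 0 < s < 1, and define λ(α) = 4^s · Γ((N+2s+2α)/4) · Γ((N+2s-2α)/4) / (Γ((N-2s+2α)/4) · Γ((N-2s-2α)/4)) for α ∈ [0, (N-2s)/2). If λ(α) = λ(0) = 4^s Γ²((N+2s)/4)/Γ²((N-2s)/4) for some α in this interval, then α = 0. -/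
/-!
By Euler's limit formula, `Γ(x + t) Γ(x - t) / Γ(x)² = ∏_{j ≥ 0} (x + j)² / ((x + j)² - t²)` for
`|t| < x`. For `t ≠ 0` every factor is strictly decreasing in `x`, hence so is the product. With
`a = (N + 2s)/4 > b = (N - 2s)/4` and `t = α/2`, the equation `λ(α) = λ(0)` says that this ratio
takes the same value at `a` and at `b`, which forces `t = 0`.
-/

open Real Filter Topology

namespace Real

lemma sq_div_sq_sub_sq_pos {t u : ℝ} (h : |t| < u) : 0 < u ^ 2 / (u ^ 2 - t ^ 2) := by
  obtain ⟨h₁, h₂⟩ := abs_lt.mp h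
  have := sq_lt_sq' h₁ h₂
  exact div_pos (by nlinarith) (by linarith)

lemma strictAntiOn_sq_div_sq_sub_sq {t : ℝ} (ht : t ≠ 0) :
    StrictAntiOn (fun u : ℝ => u ^ 2 / (u ^ 2 - t ^ 2)) (Set.Ioi |t|) := by
  intro u hu v hv huv
  obtain ⟨h₁, h₂⟩ := abs_lt.mp (Set.mem_Ioi.mp hu)
  have htu := sq_lt_sq' h₁ h₂
  have huv2 : u ^ 2 < v ^ 2 := by nlinarith
  have ht2 : 0 < t ^ 2 := by positivity
  rw [div_lt_div_iff₀ (by linarith) (by linarith)]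
  nlinarith

lemma Gamma_add_mul_Gamma_sub_pos {x t : ℝ} (h : |t| < x) :
    0 < Gamma (x + t) * Gamma (x - t) := by
  obtain ⟨h₁, h₂⟩ := abs_lt.mp h
  exact mul_pos (Gamma_pos_of_pos (by linarith)) (Gamma_pos_of_pos (by linarith))

lemma GammaSeq_add_mul_GammaSeq_sub_div_sq {x t : ℝ} (h : |t| < x) {n : ℕ} (hn : n ≠ 0) :
    GammaSeq (x + t) n * GammaSeq (x - t) n / GammaSeq x n ^ 2 =
      ∏ j ∈ Finset.range (n + 1), (x + j) ^ 2 / ((x + j) ^ 2 - t ^ 2) := by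
  obtain ⟨h₁, h₂⟩ := abs_lt.mp h
  have hn0 : (0 : ℝ) < n := by positivity
  have hprod : ∀ y : ℝ, 0 < y → ∏ j ∈ Finset.range (n + 1), (y + j) ≠ 0 :=
    fun y hy => (Finset.prod_pos fun j _ => by positivity).ne'
  have hsq : ∀ y : ℝ, (x + y) ^ 2 - t ^ 2 = (x + t + y) * (x - t + y) := fun y => by ring
  have := hprod _ (by linarith : 0 < x + t)
  have := hprod _ (by linarith : 0 < x - t)
  have := hprod _ (by linarith : 0 < x)
  have : (n.factorial : ℝ) ≠ 0 := by positivity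
  have := (rpow_pos_of_pos hn0 x).ne'
  have := (rpow_pos_of_pos hn0 t).ne'
  simp only [GammaSeq, rpow_add hn0, rpow_sub hn0, hsq, Finset.prod_div_distrib,
    Finset.prod_mul_distrib, Finset.prod_pow]
  field_simp

lemma tendsto_prod_sq_div_sq_sub_sq {x t : ℝ} (h : |t| < x) :
    Tendsto (fun n : ℕ => ∏ j ∈ Finset.range (n + 1), (x + j) ^ 2 / ((x + j) ^ 2 - t ^ 2))
      atTop (𝓝 (Gamma (x + t) * Gamma (x - t) / Gamma x ^ 2)) := by
  have hΓ : Gamma x ^ 2 ≠ 0 := (pow_pos (Gamma_pos_of_pos ((abs_nonneg t).trans_lt h)) 2).ne'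
  refine (((GammaSeq_tendsto_Gamma _).mul (GammaSeq_tendsto_Gamma _)).div
    ((GammaSeq_tendsto_Gamma x).pow 2) hΓ).congr' ?_
  filter_upwards [eventually_ne_atTop 0] with n hn
  exact GammaSeq_add_mul_GammaSeq_sub_div_sq h hn

theorem strictAntiOn_Gamma_add_mul_Gamma_sub_div_sq {t : ℝ} (ht : t ≠ 0) :
    StrictAntiOn (fun x => Gamma (x + t) * Gamma (x - t) / Gamma x ^ 2) (Set.Ioi |t|) := by
  intro b hb a ha hba
  set g : ℝ → ℝ := fun u => u ^ 2 / (u ^ 2 - t ^ 2)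
  have hg := strictAntiOn_sq_div_sq_sub_sq ht
  have hshift : ∀ (x : ℝ) (j : ℕ), x ∈ Set.Ioi |t| → x + j ∈ Set.Ioi |t| := fun x j hx =>
    Set.mem_Ioi.mpr (lt_add_of_lt_of_nonneg hx j.cast_nonneg)
  -- Compare the partial products factor by factor, keeping the strict gap at `j = 0`.
  have hpartial : ∀ n : ℕ, ∏ j ∈ Finset.range (n + 1), g (a + j) ≤
      (∏ j ∈ Finset.range (n + 1), g (b + j)) * (g a / g b) := by
    intro n
    rw [Finset.prod_range_succ', Finset.prod_range_succ']
    simp only [Nat.cast_zero, add_zero]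
    rw [mul_assoc, mul_div_cancel₀ _ (sq_div_sq_sub_sq_pos hb).ne']
    refine mul_le_mul_of_nonneg_right ?_ (sq_div_sq_sub_sq_pos ha).le
    refine Finset.prod_le_prod (fun j _ => (sq_div_sq_sub_sq_pos (hshift a _ ha)).le)
      fun j _ => hg.antitoneOn (hshift b _ hb) (hshift a _ ha) (by linarith)
  have hle := le_of_tendsto_of_tendsto' (tendsto_prod_sq_div_sq_sub_sq ha)
    ((tendsto_prod_sq_div_sq_sub_sq hb).mul_const (g a / g b)) hpartial
  have hpos : 0 < Gamma (b + t) * Gamma (b - t) / Gamma b ^ 2 :=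
    div_pos (Gamma_add_mul_Gamma_sub_pos hb)
      (pow_pos (Gamma_pos_of_pos ((abs_nonneg t).trans_lt hb)) 2)
  have hratio : g a / g b < 1 := (div_lt_one (sq_div_sq_sub_sq_pos hb)).mpr (hg hb ha hba)
  exact hle.trans_lt (mul_lt_of_lt_one_right hpos hratio)

end Real

theorem stmt_7_general (N s : ℝ) (hs0 : 0 < s)
    (lam : ℝ → ℝ)
    (hlam : ∀ α, lam α = (4 : ℝ) ^ s *
      (Gamma ((N + 2 * s + 2 * α) / 4) * Gamma ((N + 2 * s - 2 * α) / 4)) /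
      (Gamma ((N - 2 * s + 2 * α) / 4) * Gamma ((N - 2 * s - 2 * α) / 4)))
    (α : ℝ) (hα : α ∈ Set.Ico (0 : ℝ) ((N - 2 * s) / 2))
    (heq : lam α = lam 0) :
    α = 0 := by
  obtain ⟨hα0, hαlt⟩ := hα
  by_contra hne
  obtain ⟨t, rfl⟩ : ∃ t, α = 2 * t := ⟨α / 2, by ring⟩
  obtain ⟨a, ha⟩ : ∃ a, a = (N + 2 * s) / 4 := ⟨_, rfl⟩
  obtain ⟨b, hb⟩ : ∃ b, b = (N - 2 * s) / 4 := ⟨_, rfl⟩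
  have hlam' : ∀ τ, lam (2 * τ) = 4 ^ s * (Gamma (a + τ) * Gamma (a - τ)) /
      (Gamma (b + τ) * Gamma (b - τ)) := fun τ => by rw [hlam, ha, hb]; ring_nf
  have hlam0 := hlam' 0
  simp only [mul_zero, add_zero, sub_zero] at hlam0
  rw [hlam', hlam0] at heq
  have hbt : |t| < b := by rw [abs_of_nonneg (by linarith)]; linarith
  have hab : b < a := by linarith
  have hΓbt := Gamma_add_mul_Gamma_sub_pos hbt
  have := Gamma_pos_of_pos ((abs_nonneg t).trans_lt hbt)
  have := Gamma_pos_of_pos ((abs_nonneg t).trans_lt (hbt.trans hab))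
  refine (strictAntiOn_Gamma_add_mul_Gamma_sub_div_sq (by simpa using hne) hbt
    (hbt.trans hab) hab).ne ?_
  field_simp at heq ⊢
  rw [div_eq_iff hΓbt.ne'] at heq
  linear_combination heq

theorem stmt_7 (N s : ℝ) (hs0 : 0 < s) (hs1 : s < 1) (hN : 2 * s < N)
    (lam : ℝ → ℝ)
    (hlam : ∀ α, lam α = (4 : ℝ) ^ s *
      (Gamma ((N + 2 * s + 2 * α) / 4) * Gamma ((N + 2 * s - 2 * α) / 4)) /
      (Gamma ((N - 2 * s + 2 * α) / 4) * Gamma ((N - 2 * s - 2 * α) / 4)))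
    (α : ℝ) (hα : α ∈ Set.Ico (0 : ℝ) ((N - 2 * s) / 2))
    (heq : lam α = lam 0) :
    α = 0 :=
  stmt_7_general N s hs0 lam hlam α hα heq
end
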